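/- Let T > 0, U := {u ∈ L²([0,T],ℝ) : 0 ≤ u(τ) ≤ 1 for a.e. τ}, u ∈ U, η > 0, and w ∈ L²([0,T],ℝ) (in the paper, w = −∇_u J, the negative Riesz representative of the differential of the objective functional). Then Π_U[u + ηw] = Π_U[u + η Π_{C_u}[w]] in L²([0,T],ℝ), where Π_U[·](τ) = max(min(·(τ),1),0) is the metric projection onto U and Π_{C_u}[v](τ) := max(v(τ),0)·1_{{u=0}}(τ) + min(v(τ),0)·1_{{u=1}}(τ) + v(τ)·1_{{0<u<1}}(τ) is the metric projection onto the tangent cone C_u := { v ∈ L² : v ≤ 0 a.e. on {u=1}, v ≥ 0 a.e. on {u=0} }. -/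

import Mathlib

open MeasureTheory Set Filter Topology

/-- The reference measure: Lebesgue measure restricted to `[0,T]`. -/
noncomputable def muT (T : ℝ) : Measure ℝ := volume.restrict (Icc 0 T)

/-- Membership in the set of admissible controls
`U = {u ∈ L²([0,T]) : 0 ≤ u ≤ 1 a.e.}`. -/
def InU (T : ℝ) (u : ℝ → ℝ) : Prop :=
  MemLp u 2 (muT T) ∧ ∀ᵐ τ ∂(muT T), u τ ∈ Icc (0:ℝ) 1

/-- The metric projection onto `U`: `Π_U[v](τ) = max(min(v(τ),1),0)`. -/
noncomputable def projU (v : ℝ → ℝ) : ℝ → ℝ := fun τ => max (min (v τ) 1) 0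

/-- The metric projection onto the tangent cone `C_u`:
`Π_{C_u}[v] = max(v,0)·1_{u=0} + min(v,0)·1_{u=1} + v·1_{0<u<1}`. -/
noncomputable def projCu (u v : ℝ → ℝ) : ℝ → ℝ := fun τ =>
  (if u τ = 0 then max (v τ) 0 else 0) + (if u τ = 1 then min (v τ) 0 else 0) +
    (if 0 < u τ ∧ u τ < 1 then v τ else 0)

/-!
Everything happens pointwise. Where `0 < u < 1` the two steps agree because `Π_{C_u}` does
nothing there. Where `u = 0`, a step in a direction `ηv` with `v < 0` is clamped back to `0`,
so replacing `v` by `max v 0` does not change the projected step; symmetrically where `u = 1`.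
-/

namespace ProjectedStep

variable {u v : ℝ → ℝ} {τ : ℝ}

lemma projCu_apply_of_eq_zero (h : u τ = 0) : projCu u v τ = max (v τ) 0 := by
  simp [projCu, h]

lemma projCu_apply_of_eq_one (h : u τ = 1) : projCu u v τ = min (v τ) 0 := by
  simp [projCu, h]

lemma projCu_apply_of_mem_Ioo (h : u τ ∈ Ioo 0 1) : projCu u v τ = v τ := by
  simp [projCu, h.1, h.2, h.1.ne', h.2.ne]

lemma clamp_smul_max_zero {η : ℝ} (hη : 0 ≤ η) (x : ℝ) :
    max (min (η * max x 0) 1) 0 = max (min (η * x) 1) 0 := by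
  rcases le_total 0 x with hx | hx
  · rw [max_eq_left hx]
  · rw [max_eq_right hx, mul_zero, max_eq_right (min_le_left _ _ |>.trans
      (mul_nonpos_of_nonneg_of_nonpos hη hx))]
    simp

lemma clamp_one_add_smul_min_zero {η : ℝ} (hη : 0 ≤ η) (x : ℝ) :
    max (min (1 + η * min x 0) 1) 0 = max (min (1 + η * x) 1) 0 := by
  rcases le_total x 0 with hx | hx
  · rw [min_eq_left hx]
  · rw [min_eq_right hx, min_eq_right (by nlinarith : (1 : ℝ) ≤ 1 + η * x)]
    simp

lemma projU_add_smul_projCu_apply {η : ℝ} (hη : 0 ≤ η) (hu : u τ ∈ Icc 0 1) :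
    projU (fun τ => u τ + η * projCu u v τ) τ = projU (fun τ => u τ + η * v τ) τ := by
  simp only [projU]
  rcases hu.1.eq_or_lt with h0 | h0
  · rw [projCu_apply_of_eq_zero h0.symm, ← h0, zero_add, zero_add, clamp_smul_max_zero hη]
  rcases hu.2.eq_or_lt with h1 | h1
  · rw [projCu_apply_of_eq_one h1, h1, clamp_one_add_smul_min_zero hη]
  · rw [projCu_apply_of_mem_Ioo ⟨h0, h1⟩]

end ProjectedStep

theorem projected_step_eq_general (T : ℝ)
    (u : ℝ → ℝ) (hu : InU T u) (η : ℝ) (hη : 0 < η)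
    (w : ℝ → ℝ) :
    projU (fun τ => u τ + η * w τ) =ᵐ[muT T]
      projU (fun τ => u τ + η * projCu u w τ) := by
  filter_upwards [hu.2] with τ hτ
  exact (ProjectedStep.projU_add_smul_projCu_apply hη.le hτ).symm

/-- **Projected gradient step = projected tangential step.** For `u ∈ U`, `η > 0` and
`w ∈ L²` (in the paper, `w = −∇_u J`), one has
`Π_U[u + ηw] = Π_U[u + η Π_{C_u}[w]]` in `L²([0,T])`. -/
theorem projected_step_eq (T : ℝ) (hT : 0 < T)
    (u : ℝ → ℝ) (hu : InU T u) (η : ℝ) (hη : 0 < η)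
    (w : ℝ → ℝ) (hw : MemLp w 2 (muT T)) :
    projU (fun τ => u τ + η * w τ) =ᵐ[muT T]
      projU (fun τ => u τ + η * projCu u w τ) :=
  projected_step_eq_general T u hu η hη w
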